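/- arXiv:2511.12545 — 2 statements merged into one kernel-verified Lean document; each statement's English description precedes it below -/
import Mathlib

section
/- Let q ∈ [0, 1), let ν be a Borel probability measure on ℝ^d with ν({v : ‖v‖ ≤ q}) = q (Euclidean norm), and let Q₁, Q₂ : ℝ^d → ℝ^d be Borel-measurable maps with pushforwards P₁ = Q₁ # ν, P₂ = Q₂ # ν, such that Q₁(v) ≥ Q₂(v) componentwise for all v with ‖v‖ ≤ q. Let u : ℝ^d → ℝ be Borel-measurable, nondecreasing, and bounded with m ≤ u ≤ M. Define Δ_q = ∫_{‖v‖ ≤ q} ( u(Q₁(v)) − u(Q₂(v)) ) dν(v). Then Δ_q ≥ 0 and ∫ u dP₁ − ∫ u dP₂ ≥ Δ_q − (1 − q)(M − m). -/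
/-!
Off the ball `{‖v‖ ≤ q}` the integrand `u ∘ Q₁ - u ∘ Q₂` is at least `m - M`, and the
complement of the ball has mass at most `1 - q`; on the ball it is nonnegative because `u`
is nondecreasing and `Q₁ ≥ Q₂` there. Splitting `∫ u dP₁ - ∫ u dP₂ = ∫ (u ∘ Q₁ - u ∘ Q₂) dν`
along the ball gives both claims.
-/

open MeasureTheory

namespace MeasureTheory

variable {α : Type*} [MeasurableSpace α] {μ : Measure α} {s : Set α}

theorem setIntegral_sub_sub_le_integral_sub [IsFiniteMeasure μ] {f g : α → ℝ} {m M : ℝ}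
    (hs : MeasurableSet s) (hf : Integrable f μ) (hg : Integrable g μ)
    (hfm : ∀ x, m ≤ f x) (hgM : ∀ x, g x ≤ M) :
    ∫ x in s, (f x - g x) ∂μ - μ.real sᶜ * (M - m) ≤ ∫ x, f x ∂μ - ∫ x, g x ∂μ := by
  have hcompl : (m - M) * μ.real sᶜ ≤ ∫ x in sᶜ, (f x - g x) ∂μ :=
    setIntegral_ge_of_const_le_real hs.compl (measure_ne_top μ sᶜ)
      (fun x _ => by linarith [hfm x, hgM x]) (hf.sub hg).integrableOn
  have hsplit : ∫ x in s, (f x - g x) ∂μ + ∫ x in sᶜ, (f x - g x) ∂μ = ∫ x, (f x - g x) ∂μ :=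
    integral_add_compl hs (hf.sub hg)
  rw [integral_sub hf hg] at hsplit
  linarith

theorem measureReal_compl_le_one_sub [IsProbabilityMeasure μ] {q : ℝ} (hs : MeasurableSet s)
    (hμs : μ s = ENNReal.ofReal q) : μ.real sᶜ ≤ 1 - q := by
  have hq : q ≤ μ.real s := by
    rw [measureReal_def, hμs, ENNReal.toReal_ofReal']
    exact le_max_left q 0
  rw [probReal_compl_eq_one_sub hs]
  linarith

end MeasureTheory

theorem qdominance_utility_gap_bound_general
    (d : ℕ) (q : ℝ)
    (ν : Measure (EuclideanSpace ℝ (Fin d))) [IsProbabilityMeasure ν]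
    (hν : ν {v : EuclideanSpace ℝ (Fin d) | ‖v‖ ≤ q} = ENNReal.ofReal q)
    (Q₁ Q₂ : EuclideanSpace ℝ (Fin d) → EuclideanSpace ℝ (Fin d))
    (hQ₁ : Measurable Q₁) (hQ₂ : Measurable Q₂)
    (hdom : ∀ v : EuclideanSpace ℝ (Fin d), ‖v‖ ≤ q → ∀ i, Q₂ v i ≤ Q₁ v i)
    (u : EuclideanSpace ℝ (Fin d) → ℝ) (hu : Measurable u)
    (hmono : ∀ x y : EuclideanSpace ℝ (Fin d), (∀ i, x i ≤ y i) → u x ≤ u y)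
    (m M : ℝ) (hbd : ∀ x, m ≤ u x ∧ u x ≤ M) :
    0 ≤ ∫ v in {v : EuclideanSpace ℝ (Fin d) | ‖v‖ ≤ q}, (u (Q₁ v) - u (Q₂ v)) ∂ν ∧
    (∫ v in {v : EuclideanSpace ℝ (Fin d) | ‖v‖ ≤ q}, (u (Q₁ v) - u (Q₂ v)) ∂ν)
        - (1 - q) * (M - m)
      ≤ (∫ x, u x ∂(ν.map Q₁)) - ∫ x, u x ∂(ν.map Q₂) := by
  set S : Set (EuclideanSpace ℝ (Fin d)) := {v | ‖v‖ ≤ q}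
  have hS : MeasurableSet S := (isClosed_le continuous_norm continuous_const).measurableSet
  have hint : ∀ Q, Measurable Q → Integrable (fun v => u (Q v)) ν := fun Q hQ =>
    .of_bound (hu.comp hQ).aestronglyMeasurable (max |m| |M|)
      (ae_of_all _ fun v => abs_le_max_abs_abs (hbd (Q v)).1 (hbd (Q v)).2)
  have hmM : m ≤ M := (hbd 0).1.trans (hbd 0).2
  refine ⟨setIntegral_nonneg hS fun v hv => sub_nonneg.2 (hmono _ _ (hdom v hv)), ?_⟩
  rw [integral_map hQ₁.aemeasurable hu.aestronglyMeasurable,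
    integral_map hQ₂.aemeasurable hu.aestronglyMeasurable]
  calc ∫ v in S, (u (Q₁ v) - u (Q₂ v)) ∂ν - (1 - q) * (M - m)
      ≤ ∫ v in S, (u (Q₁ v) - u (Q₂ v)) ∂ν - ν.real Sᶜ * (M - m) := by
        gcongr
        exact measureReal_compl_le_one_sub hS hν
    _ ≤ ∫ v, u (Q₁ v) ∂ν - ∫ v, u (Q₂ v) ∂ν :=
        setIntegral_sub_sub_le_integral_sub hS (hint Q₁ hQ₁) (hint Q₂ hQ₂)
          (fun v => (hbd (Q₁ v)).1) (fun v => (hbd (Q₂ v)).2)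

/-- for `q ∈ [0,1)`, a Borel probability `ν` on `ℝ^d` with
`ν({‖v‖ ≤ q}) = q`, Borel maps `Q₁, Q₂` with `Q₁(v) ≥ Q₂(v)` componentwise on
`{‖v‖ ≤ q}`, and a bounded Borel-measurable nondecreasing `u` with
`m ≤ u ≤ M`, the quantity `Δ_q = ∫_{‖v‖≤q} (u(Q₁(v)) − u(Q₂(v))) dν` satisfies
`Δ_q ≥ 0` and `∫ u d(Q₁ # ν) − ∫ u d(Q₂ # ν) ≥ Δ_q − (1 − q)(M − m)`. -/
theorem qdominance_utility_gap_bound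
    (d : ℕ) (q : ℝ) (hq0 : 0 ≤ q) (hq1 : q < 1)
    (ν : Measure (EuclideanSpace ℝ (Fin d))) [IsProbabilityMeasure ν]
    (hν : ν {v : EuclideanSpace ℝ (Fin d) | ‖v‖ ≤ q} = ENNReal.ofReal q)
    (Q₁ Q₂ : EuclideanSpace ℝ (Fin d) → EuclideanSpace ℝ (Fin d))
    (hQ₁ : Measurable Q₁) (hQ₂ : Measurable Q₂)
    (hdom : ∀ v : EuclideanSpace ℝ (Fin d), ‖v‖ ≤ q → ∀ i, Q₂ v i ≤ Q₁ v i)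
    (u : EuclideanSpace ℝ (Fin d) → ℝ) (hu : Measurable u)
    (hmono : ∀ x y : EuclideanSpace ℝ (Fin d), (∀ i, x i ≤ y i) → u x ≤ u y)
    (m M : ℝ) (hbd : ∀ x, m ≤ u x ∧ u x ≤ M) :
    0 ≤ ∫ v in {v : EuclideanSpace ℝ (Fin d) | ‖v‖ ≤ q}, (u (Q₁ v) - u (Q₂ v)) ∂ν ∧
    (∫ v in {v : EuclideanSpace ℝ (Fin d) | ‖v‖ ≤ q}, (u (Q₁ v) - u (Q₂ v)) ∂ν)
        - (1 - q) * (M - m)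
      ≤ (∫ x, u x ∂(ν.map Q₁)) - ∫ x, u x ∂(ν.map Q₂) :=
  qdominance_utility_gap_bound_general d q ν hν Q₁ Q₂ hQ₁ hQ₂ hdom u hu hmono m M hbd
end

section
/- (Uniqueness of the optimal quadratic transport map.) Let P₁ and P₂ be Borel probability measures on ℝ^d with finite second moments, with P₁ absolutely continuous with respect to Lebesgue measure. If T and T' are Borel-measurable maps ℝ^d → ℝ^d such that each pushes P₁ forward to P₂ and each is optimal for the quadratic cost, i.e. ∫ ‖x − T(x)‖² dP₁ = ∫ ‖x − T'(x)‖² dP₁ = inf over couplings γ of (P₁,P₂) of ∫ ‖x − y‖² dγ, then T = T' P₁-almost everywhere; that is, P₁({x : T(x) ≠ T'(x)}) = 0. -/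
/-!
Averaging the two graph couplings gives an optimal plan `γ`. Moving a little mass of `γ` between
small balls around two points `p`, `q` of its support (swapping their second marginals) cannot
lower the cost, which for a continuous cost gives `c p + c q ≤ c (p.1, q.2) + c (q.1, p.2)`; for
the quadratic cost this says that the support of `γ` is a monotone relation. A closed monotone
relation is single-valued off a Lebesgue-null set: the points whose fibre contains two points of
norm `≤ k` separated in the `i`-th coordinate by rationals `a < b` form a closed set meeting each
line parallel to the `i`-th axis at most once, hence a null set. As `P₁ ≪ volume` and both graphs
lie in the support `P₁`-a.e., `T = T'` `P₁`-a.e.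
-/

open MeasureTheory Set Filter
open scoped RealInnerProductSpace Topology ENNReal

theorem MeasureTheory.Measure.prod_apply_eq_zero_of_subsingleton_slices {α β : Type*}
    [MeasurableSpace α] [MeasurableSpace β] {μ : Measure α} {ν : Measure β}
    [NullSingletonClass μ] [SFinite μ] [SFinite ν] {s : Set (α × β)} (hs : MeasurableSet s)
    (h : ∀ y, {x | (x, y) ∈ s}.Subsingleton) : μ.prod ν s = 0 := by
  have hslice (y : β) : μ ((fun x => (x, y)) ⁻¹' s) = 0 := (h y).measure_zero μ
  simp [Measure.prod_apply_symm hs, hslice]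

theorem MeasureTheory.Measure.inv_two_smul_add_self {α : Type*} [MeasurableSpace α]
    (μ : Measure α) : (2⁻¹ : ℝ≥0∞) • (μ + μ) = μ := by
  rw [← two_smul ℝ≥0∞ μ, smul_smul, ENNReal.inv_mul_cancel two_ne_zero ENNReal.ofNat_ne_top,
    one_smul]

theorem EuclideanSpace.volume_eq_zero_of_axis_lines_subsingleton {n : ℕ} (i : Fin n)
    {s : Set (EuclideanSpace ℝ (Fin n))} (hs : MeasurableSet s)
    (h : ∀ x ∈ s, ∀ y ∈ s, (∀ j ≠ i, x j = y j) → x = y) : volume s = 0 := by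
  obtain ⟨m, rfl⟩ := Nat.exists_eq_add_one.2 i.pos
  let e := (MeasurableEquiv.piFinSuccAbove (fun _ : Fin (m + 1) => ℝ) i).symm.trans
    (MeasurableEquiv.toLp 2 (Fin (m + 1) → ℝ))
  have he : MeasurePreserving e (volume.prod volume) volume :=
    (PiLp.volume_preserving_toLp (Fin (m + 1))).comp
      (volume_preserving_piFinSuccAbove (fun _ : Fin (m + 1) => ℝ) i).symm
  rw [← he.measure_preimage hs.nullMeasurableSet]
  refine Measure.prod_apply_eq_zero_of_subsingleton_slices (e.measurable hs) fun y t ht t' ht' => ?_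
  have key := h _ ht _ ht' fun j hj => by
    obtain ⟨k, rfl⟩ := Fin.exists_succAbove_eq hj
    simp [e, Fin.insertNthEquiv]
  simpa [e, Fin.insertNthEquiv] using congrArg (· i) key

theorem IsClosed.isClosed_setOf_exists_mem_prod {X Y : Type*} [TopologicalSpace X]
    [TopologicalSpace Y] {M : Set (X × Y)} (hM : IsClosed M) {K : Set Y} (hK : IsCompact K) :
    IsClosed {x | ∃ y ∈ K, (x, y) ∈ M} := by
  have : CompactSpace K := isCompact_iff_compactSpace.1 hK
  convert isClosedMap_fst_of_compactSpace (X := X) (Y := K) _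
    (hM.preimage (continuous_fst.prodMk (continuous_subtype_val.comp continuous_snd)))
  ext x
  simp [Subtype.exists]

def IsMonotoneRel {E : Type*} [NormedAddCommGroup E] [InnerProductSpace ℝ E]
    (M : Set (E × E)) : Prop :=
  ∀ p ∈ M, ∀ q ∈ M, 0 ≤ ⟪p.1 - q.1, p.2 - q.2⟫

namespace IsMonotoneRel

variable {ι : Type*} [Fintype ι] {M : Set (EuclideanSpace ℝ ι × EuclideanSpace ℝ ι)}

theorem coord_le_of_coord_lt (hM : IsMonotoneRel M) {x x' y y' : EuclideanSpace ℝ ι} {i : ι}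
    (hy : (x, y) ∈ M) (hy' : (x', y') ∈ M) (hxx' : ∀ j ≠ i, x j = x' j) (hlt : y' i < y i) :
    x' i ≤ x i := by
  classical
  have hsub : x - x' = EuclideanSpace.single i (x i - x' i) := by
    ext j
    rcases eq_or_ne j i with rfl | hj
    · simp
    · simp [hj, hxx' j hj]
  have := hM _ hy _ hy'
  simp only [hsub, EuclideanSpace.inner_single_left, conj_trivial, PiLp.sub_apply] at this
  exact sub_nonneg.1 (nonneg_of_mul_nonneg_left this (sub_pos.2 hlt))

/-- For monotone `M` and `a < b`, this set meets each line parallel to the `i`-th axis at most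
once. -/
def splittingSet (M : Set (EuclideanSpace ℝ ι × EuclideanSpace ℝ ι)) (i : ι) (a b : ℝ) (k : ℕ) :
    Set (EuclideanSpace ℝ ι) :=
  {x | ∃ y ∈ Metric.closedBall 0 k ∩ {y | b ≤ y i}, (x, y) ∈ M} ∩
    {x | ∃ y ∈ Metric.closedBall 0 k ∩ {y | y i ≤ a}, (x, y) ∈ M}

theorem isClosed_splittingSet (hM : IsClosed M) (i : ι) (a b : ℝ) (k : ℕ) :
    IsClosed (splittingSet M i a b k) :=
  have hcoord : Continuous fun y : EuclideanSpace ℝ ι => y i := by fun_prop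
  (hM.isClosed_setOf_exists_mem_prod ((isCompact_closedBall _ _).inter_right
    (isClosed_le continuous_const hcoord))).inter
  (hM.isClosed_setOf_exists_mem_prod ((isCompact_closedBall _ _).inter_right
    (isClosed_le hcoord continuous_const)))

section

variable {n : ℕ} {M : Set (EuclideanSpace ℝ (Fin n) × EuclideanSpace ℝ (Fin n))}

theorem volume_splittingSet (hM : IsMonotoneRel M) (hMc : IsClosed M) (i : Fin n) {a b : ℝ}
    (hab : a < b) (k : ℕ) : volume (splittingSet M i a b k) = 0 := by
  have hle {x x'} (hx : x ∈ splittingSet M i a b k) (hx' : x' ∈ splittingSet M i a b k)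
      (hxx' : ∀ j ≠ i, x j = x' j) : x' i ≤ x i := by
    obtain ⟨y, ⟨-, hby⟩, hy⟩ := hx.1
    obtain ⟨y', ⟨-, hya⟩, hy'⟩ := hx'.2
    exact hM.coord_le_of_coord_lt hy hy' hxx' (hya.trans_lt (hab.trans_le hby))
  refine EuclideanSpace.volume_eq_zero_of_axis_lines_subsingleton i
    (isClosed_splittingSet hMc i a b k).measurableSet fun x hx x' hx' hxx' => ?_
  ext j
  rcases eq_or_ne j i with rfl | hj
  · exact le_antisymm (hle hx' hx fun j hj => (hxx' j hj).symm) (hle hx hx' hxx')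
  · exact hxx' j hj

theorem ae_subsingleton_fiber (hM : IsMonotoneRel M) (hMc : IsClosed M) :
    ∀ᵐ x, {y | (x, y) ∈ M}.Subsingleton := by
  have hcover {x y y'} {i : Fin n} (hy : (x, y) ∈ M) (hy' : (x, y') ∈ M) (hlt : y' i < y i) :
      x ∈ ⋃ (i : Fin n) (a : ℚ) (b : ℚ) (_ : a < b) (k : ℕ), splittingSet M i a b k := by
    obtain ⟨a, hya, hab⟩ := exists_rat_btwn hlt
    obtain ⟨b, hab, hby⟩ := exists_rat_btwn hab
    obtain ⟨k, hk⟩ := exists_nat_ge (max ‖y‖ ‖y'‖)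
    simp only [mem_iUnion]
    exact ⟨i, a, b, by exact_mod_cast hab, k,
      ⟨y, ⟨mem_closedBall_zero_iff.2 (le_of_max_le_left hk), hby.le⟩, hy⟩,
      ⟨y', ⟨mem_closedBall_zero_iff.2 (le_of_max_le_right hk), hya.le⟩, hy'⟩⟩
  have hnull : volume (⋃ (i : Fin n) (a : ℚ) (b : ℚ) (_ : a < b) (k : ℕ),
      splittingSet M i a b k) = 0 :=
    measure_iUnion_null fun i => measure_iUnion_null fun a => measure_iUnion_null fun b =>
      measure_iUnion_null fun hab => measure_iUnion_null fun k =>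
        hM.volume_splittingSet hMc i (by exact_mod_cast hab) k
  rw [ae_iff]
  refine measure_mono_null (fun x hx => ?_) hnull
  obtain ⟨y, hy, y', hy', hne⟩ : ∃ y, (x, y) ∈ M ∧ ∃ y', (x, y') ∈ M ∧ y ≠ y' := by
    simpa [Set.Subsingleton] using hx
  obtain ⟨i, hi⟩ : ∃ i, y i ≠ y' i := by
    by_contra! h
    exact hne (PiLp.ext h)
  rcases hi.lt_or_gt with hlt | hlt
  · exact hcover hy' hy hlt
  · exact hcover hy hy' hlt

end

end IsMonotoneRel

section TransportPlan

variable {X Y : Type*} [MeasurableSpace X] [MeasurableSpace Y]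

def IsOptimalTransportPlan (c : X × Y → ℝ) (γ : Measure (X × Y)) : Prop :=
  ∀ γ' : Measure (X × Y), IsProbabilityMeasure γ' → γ'.fst = γ.fst → γ'.snd = γ.snd →
    ∫ r, c r ∂γ ≤ ∫ r, c r ∂γ'

noncomputable def crossCoupling (ρ₁ ρ₂ : Measure (X × Y)) : Measure (X × Y) :=
  ρ₁.fst.prod ρ₂.snd + ρ₂.fst.prod ρ₁.snd

variable {c : X × Y → ℝ} {ρ₁ ρ₂ : Measure (X × Y)} [SFinite ρ₁] [SFinite ρ₂]

theorem fst_crossCoupling : (crossCoupling ρ₁ ρ₂).fst = (ρ₂ univ • ρ₁ + ρ₁ univ • ρ₂).fst := by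
  ext s hs
  simp [crossCoupling, Measure.fst_apply hs, ← prod_univ, Measure.snd_univ, mul_comm]

theorem snd_crossCoupling : (crossCoupling ρ₁ ρ₂).snd = (ρ₂ univ • ρ₁ + ρ₁ univ • ρ₂).snd := by
  ext s hs
  simp [crossCoupling, Measure.snd_apply hs, ← univ_prod, Measure.fst_univ, mul_comm, add_comm]

theorem IsOptimalTransportPlan.integral_le_of_marginals_eq {κ α β : Measure (X × Y)}
    [IsProbabilityMeasure (κ + α)]
    (hγ : IsOptimalTransportPlan c (κ + α)) (hint : Integrable c (κ + α))
    (hβ : Integrable c β) (hfst : β.fst = α.fst) (hsnd : β.snd = α.snd) :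
    ∫ r, c r ∂α ≤ ∫ r, c r ∂β := by
  have hfst' : (κ + β).fst = (κ + α).fst := by rw [Measure.fst_add, Measure.fst_add, hfst]
  have hsnd' : (κ + β).snd = (κ + α).snd := by rw [Measure.snd_add, Measure.snd_add, hsnd]
  have hprob : IsProbabilityMeasure (κ + β) :=
    ⟨by rw [← Measure.fst_univ, hfst', Measure.fst_univ, measure_univ]⟩
  have hle := hγ (κ + β) hprob hfst' hsnd'
  rwa [integral_add_measure (hint.mono_measure (Measure.le_add_right le_rfl))
      (hint.mono_measure (Measure.le_add_left le_rfl)),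
    integral_add_measure (hint.mono_measure (Measure.le_add_right le_rfl)) hβ,
    add_le_add_iff_left] at hle

theorem IsOptimalTransportPlan.inv_two_smul_add {γ₁ γ₂ : Measure (X × Y)}
    (h₁ : IsOptimalTransportPlan c γ₁) (hint₁ : Integrable c γ₁) (hint₂ : Integrable c γ₂)
    (hfst : γ₂.fst = γ₁.fst) (hsnd : γ₂.snd = γ₁.snd) (hcost : ∫ r, c r ∂γ₂ = ∫ r, c r ∂γ₁) :
    IsOptimalTransportPlan c ((2⁻¹ : ℝ≥0∞) • (γ₁ + γ₂)) := by
  intro γ' hγ' h1 h2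
  have hfst' : ((2⁻¹ : ℝ≥0∞) • (γ₁ + γ₂)).fst = γ₁.fst := by
    rw [Measure.fst, Measure.map_smul, ← Measure.fst, Measure.fst_add, hfst,
      Measure.inv_two_smul_add_self]
  have hsnd' : ((2⁻¹ : ℝ≥0∞) • (γ₁ + γ₂)).snd = γ₁.snd := by
    rw [Measure.snd, Measure.map_smul, ← Measure.snd, Measure.snd_add, hsnd,
      Measure.inv_two_smul_add_self]
  rw [integral_smul_measure, integral_add_measure hint₁ hint₂, hcost, ENNReal.toReal_inv,
    ENNReal.toReal_ofNat, smul_eq_mul, ← two_mul, inv_mul_cancel_left₀ two_ne_zero]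
  exact h₁ γ' hγ' (h1.trans hfst') (h2.trans hsnd')

theorem IsOptimalTransportPlan.integral_restrict_le_integral_crossCoupling
    {γ : Measure (X × Y)} [IsProbabilityMeasure γ] (hγ : IsOptimalTransportPlan c γ)
    (hint : Integrable c γ) {A₁ A₂ : Set (X × Y)}
    (hA₁ : MeasurableSet A₁) (hA₂ : MeasurableSet A₂) (hA : Disjoint A₁ A₂)
    (hcross : Integrable c (crossCoupling (γ.restrict A₁) (γ.restrict A₂))) :
    γ.real A₂ * ∫ r in A₁, c r ∂γ + γ.real A₁ * ∫ r in A₂, c r ∂γ ≤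
      ∫ r, c r ∂crossCoupling (γ.restrict A₁) (γ.restrict A₂) := by
  set ρ₁ := γ.restrict A₁
  set ρ₂ := γ.restrict A₂
  have hsplit {m : ℝ≥0∞} (hm : m ≤ 1) (ρ : Measure (X × Y)) : (1 - m) • ρ + m • ρ = ρ := by
    rw [← add_smul, tsub_add_cancel_of_le hm, one_smul]
  set κ := γ.restrict (A₁ ∪ A₂)ᶜ + ((1 - γ A₂) • ρ₁ + (1 - γ A₁) • ρ₂)
  set α := ρ₂ univ • ρ₁ + ρ₁ univ • ρ₂
  -- `crossCoupling ρ₁ ρ₂` has the same marginals as `α`, so it may replace `α` in `γ = κ + α`.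
  have hdecomp : κ + α = γ := by
    calc κ + α = γ.restrict (A₁ ∪ A₂)ᶜ + (((1 - γ A₂) • ρ₁ + γ A₂ • ρ₁) +
          ((1 - γ A₁) • ρ₂ + γ A₁ • ρ₂)) := by
          simp only [κ, α, ρ₁, ρ₂, Measure.restrict_apply_univ]
          abel
      _ = γ.restrict (A₁ ∪ A₂)ᶜ + γ.restrict (A₁ ∪ A₂) := by
          rw [hsplit prob_le_one, hsplit prob_le_one, Measure.restrict_union hA hA₂]
      _ = γ := Measure.restrict_compl_add_restrict (hA₁.union hA₂)
  have : IsProbabilityMeasure (κ + α) := by rwa [hdecomp]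
  have hle := IsOptimalTransportPlan.integral_le_of_marginals_eq (by rwa [hdecomp])
    (by rwa [hdecomp]) hcross fst_crossCoupling snd_crossCoupling
  rwa [integral_add_measure (hint.restrict.smul_measure (measure_ne_top _ _))
      (hint.restrict.smul_measure (measure_ne_top _ _)), integral_smul_measure,
    integral_smul_measure, smul_eq_mul, smul_eq_mul, ← measureReal_def, ← measureReal_def,
    measureReal_restrict_apply_univ, measureReal_restrict_apply_univ] at hle

end TransportPlan

theorem integrable_of_ae_abs_sub_le {α : Type*} [MeasurableSpace α] {ξ : Measure α}
    [IsFiniteMeasure ξ] {f : α → ℝ} (hf : AEStronglyMeasurable f ξ) {a η : ℝ}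
    (h : ∀ᵐ x ∂ξ, |f x - a| ≤ η) : Integrable f ξ :=
  Integrable.of_bound hf (|a| + η) <| h.mono fun x hx => by
    have := abs_sub_abs_le_abs_sub (f x) a
    rw [Real.norm_eq_abs]
    linarith

theorem abs_integral_sub_le_of_ae_abs_sub_le {α : Type*} [MeasurableSpace α] {ξ : Measure α}
    [IsFiniteMeasure ξ] {f : α → ℝ} (hf : AEStronglyMeasurable f ξ) {a η : ℝ}
    (h : ∀ᵐ x ∂ξ, |f x - a| ≤ η) : |∫ x, f x ∂ξ - ξ.real univ * a| ≤ η * ξ.real univ := by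
  have := norm_integral_le_of_norm_le_const (μ := ξ) (f := fun x => f x - a) h
  rwa [integral_sub (integrable_of_ae_abs_sub_le hf h) (integrable_const a), integral_const,
    smul_eq_mul] at this

theorem Continuous.eventually_forall_ball_abs_sub_le {X : Type*} [PseudoMetricSpace X]
    {c : X → ℝ} (hc : Continuous c) (b : X) {η : ℝ} (hη : 0 < η) :
    ∀ᶠ ε in 𝓝 (0 : ℝ), ∀ r ∈ Metric.ball b ε, |c r - c b| ≤ η :=
  (eventually_ball_subset (hc.continuousAt.preimage_mem_nhds
    (Metric.closedBall_mem_nhds (c b) hη))).mono fun _ hε _ hr => hε hr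

theorem ae_mem_prod_fst_snd {X Y : Type*} [MeasurableSpace X] [MeasurableSpace Y]
    {ρ₁ ρ₂ : Measure (X × Y)} {s : Set X} {t : Set Y}
    (hs : MeasurableSet s) (ht : MeasurableSet t) (h₁ : ∀ᵐ r ∂ρ₁, r.1 ∈ s)
    (h₂ : ∀ᵐ r ∂ρ₂, r.2 ∈ t) : ∀ᵐ r ∂ρ₁.fst.prod ρ₂.snd, r ∈ s ×ˢ t :=
  (Measure.quasiMeasurePreserving_fst.ae ((ae_map_iff measurable_fst.aemeasurable hs).2 h₁)).and
    (Measure.quasiMeasurePreserving_snd.ae ((ae_map_iff measurable_snd.aemeasurable ht).2 h₂))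

theorem measureReal_univ_fst_prod_snd {X Y : Type*} [MeasurableSpace X] [MeasurableSpace Y]
    (ρ₁ ρ₂ : Measure (X × Y)) [SFinite ρ₂] :
    (ρ₁.fst.prod ρ₂.snd).real univ = ρ₁.real univ * ρ₂.real univ := by
  rw [measureReal_def, measureReal_def, measureReal_def, ← Measure.fst_univ (ρ := ρ₁),
    ← Measure.snd_univ (ρ := ρ₂), ← ENNReal.toReal_mul, ← Measure.prod_prod, univ_prod_univ]

theorem ae_fst_prod_snd_restrict_ball_mem {X Y : Type*} [PseudoMetricSpace X]
    [PseudoMetricSpace Y] [MeasurableSpace X] [MeasurableSpace Y] [OpensMeasurableSpace X]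
    [OpensMeasurableSpace Y] [SecondCountableTopologyEither X Y] {γ : Measure (X × Y)}
    (p q : X × Y) (ε : ℝ) :
    ∀ᵐ r ∂(γ.restrict (Metric.ball p ε)).fst.prod (γ.restrict (Metric.ball q ε)).snd,
      r ∈ Metric.ball (p.1, q.2) ε := by
  refine (ae_mem_prod_fst_snd measurableSet_ball measurableSet_ball
    ((ae_restrict_mem measurableSet_ball).mono fun r hr =>
      show dist r.1 p.1 < ε from (max_lt_iff.1 hr).1)
    ((ae_restrict_mem measurableSet_ball).mono fun r hr =>
      show dist r.2 q.2 < ε from (max_lt_iff.1 hr).2)).mono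
    fun r hr => show max _ _ < ε from max_lt_iff.2 ⟨hr.1, hr.2⟩

section MetricTransportPlan

variable {X Y : Type*} [MetricSpace X] [MetricSpace Y] [MeasurableSpace X] [MeasurableSpace Y]
  [OpensMeasurableSpace X] [OpensMeasurableSpace Y] [SecondCountableTopologyEither X Y]
  {c : X × Y → ℝ} {γ : Measure (X × Y)} [IsProbabilityMeasure γ]

theorem IsOptimalTransportPlan.add_le_add_of_near_on_balls (hc : Continuous c)
    (hγ : IsOptimalTransportPlan c γ) (hint : Integrable c γ) {p q : X × Y} {ε η : ℝ}
    (hA : Disjoint (Metric.ball p ε) (Metric.ball q ε))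
    (hm₁ : 0 < γ.real (Metric.ball p ε)) (hm₂ : 0 < γ.real (Metric.ball q ε))
    (hp : ∀ r ∈ Metric.ball p ε, |c r - c p| ≤ η) (hq : ∀ r ∈ Metric.ball q ε, |c r - c q| ≤ η)
    (hpq : ∀ r ∈ Metric.ball (p.1, q.2) ε, |c r - c (p.1, q.2)| ≤ η)
    (hqp : ∀ r ∈ Metric.ball (q.1, p.2) ε, |c r - c (q.1, p.2)| ≤ η) :
    c p + c q ≤ c (p.1, q.2) + c (q.1, p.2) + 4 * η := by
  set A₁ := Metric.ball p ε
  set A₂ := Metric.ball q ε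
  have hπ₁₂ := (ae_fst_prod_snd_restrict_ball_mem (γ := γ) p q ε).mono hpq
  have hπ₂₁ := (ae_fst_prod_snd_restrict_ball_mem (γ := γ) q p ε).mono hqp
  have hI₁ := abs_integral_sub_le_of_ae_abs_sub_le hc.aestronglyMeasurable
    ((ae_restrict_mem (μ := γ) measurableSet_ball).mono hp)
  have hI₂ := abs_integral_sub_le_of_ae_abs_sub_le hc.aestronglyMeasurable
    ((ae_restrict_mem (μ := γ) measurableSet_ball).mono hq)
  have hJ₁₂ := abs_integral_sub_le_of_ae_abs_sub_le hc.aestronglyMeasurable hπ₁₂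
  have hJ₂₁ := abs_integral_sub_le_of_ae_abs_sub_le hc.aestronglyMeasurable hπ₂₁
  rw [measureReal_restrict_apply_univ] at hI₁ hI₂
  rw [measureReal_univ_fst_prod_snd, measureReal_restrict_apply_univ,
    measureReal_restrict_apply_univ] at hJ₁₂ hJ₂₁
  have hint₁₂ := integrable_of_ae_abs_sub_le hc.aestronglyMeasurable hπ₁₂
  have hint₂₁ := integrable_of_ae_abs_sub_le hc.aestronglyMeasurable hπ₂₁
  have hle := hγ.integral_restrict_le_integral_crossCoupling hint measurableSet_ball
    measurableSet_ball hA (hint₁₂.add_measure hint₂₁)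
  rw [crossCoupling, integral_add_measure hint₁₂ hint₂₁] at hle
  rw [abs_le] at hI₁ hI₂ hJ₁₂ hJ₂₁
  have h₁ : γ.real A₂ * (γ.real A₁ * c p - η * γ.real A₁) ≤ γ.real A₂ * ∫ r in A₁, c r ∂γ :=
    mul_le_mul_of_nonneg_left (by linarith [hI₁.1]) hm₂.le
  have h₂ : γ.real A₁ * (γ.real A₂ * c q - η * γ.real A₂) ≤ γ.real A₁ * ∫ r in A₂, c r ∂γ :=
    mul_le_mul_of_nonneg_left (by linarith [hI₂.1]) hm₁.le
  refine le_of_mul_le_mul_left ?_ (mul_pos hm₁ hm₂)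
  linarith [hJ₁₂.2, hJ₂₁.2]

theorem IsOptimalTransportPlan.add_le_add_of_mem_support (hc : Continuous c)
    (hγ : IsOptimalTransportPlan c γ) (hint : Integrable c γ) {p q : X × Y}
    (hp : p ∈ γ.support) (hq : q ∈ γ.support) :
    c p + c q ≤ c (p.1, q.2) + c (q.1, p.2) := by
  rcases eq_or_ne p q with rfl | hpq
  · simp
  refine le_of_forall_pos_le_add fun η hη => ?_
  have hη4 : 0 < η / 4 := by positivity
  obtain ⟨ε, ⟨hpqε, hp', hq', hpq', hqp'⟩, hε⟩ := (((eventually_lt_nhds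
    (half_pos (dist_pos.2 hpq))).and ((hc.eventually_forall_ball_abs_sub_le p hη4).and
    ((hc.eventually_forall_ball_abs_sub_le q hη4).and
    ((hc.eventually_forall_ball_abs_sub_le (p.1, q.2) hη4).and
    (hc.eventually_forall_ball_abs_sub_le (q.1, p.2) hη4))))).filter_mono
    (nhdsWithin_le_nhds (s := Ioi 0))).and self_mem_nhdsWithin |>.exists
  have hpos {b} (hb : b ∈ γ.support) : 0 < γ.real (Metric.ball b ε) :=
    ENNReal.toReal_pos ((Measure.mem_support_iff_forall b).1 hb _
      (Metric.ball_mem_nhds b hε)).ne' (measure_ne_top _ _)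
  have := hγ.add_le_add_of_near_on_balls hc hint
    (Metric.ball_disjoint_ball (by linarith)) (hpos hp) (hpos hq) hp' hq' hpq' hqp'
  linarith

end MetricTransportPlan

section QuadraticCost

variable {E : Type*} [NormedAddCommGroup E] [InnerProductSpace ℝ E]

theorem inner_sub_sub_nonneg_of_norm_sub_sq_add_le {x₁ x₂ y₁ y₂ : E}
    (h : ‖x₁ - y₁‖ ^ 2 + ‖x₂ - y₂‖ ^ 2 ≤ ‖x₁ - y₂‖ ^ 2 + ‖x₂ - y₁‖ ^ 2) :
    0 ≤ ⟪x₁ - x₂, y₁ - y₂⟫ := by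
  simp only [norm_sub_sq_real] at h
  simp only [inner_sub_left, inner_sub_right] at *
  linarith

theorem norm_sub_sq_le (x y : E) : ‖x - y‖ ^ 2 ≤ 2 * ‖x‖ ^ 2 + 2 * ‖y‖ ^ 2 := by
  have := parallelogram_law_with_norm ℝ x y
  nlinarith [mul_self_nonneg ‖x + y‖]

variable [MeasurableSpace E] [OpensMeasurableSpace E] [SecondCountableTopology E]
  {γ : Measure (E × E)}

theorem integrable_norm_sub_sq (h₁ : Integrable (fun x => ‖x‖ ^ 2) γ.fst)
    (h₂ : Integrable (fun y => ‖y‖ ^ 2) γ.snd) : Integrable (fun r : E × E => ‖r.1 - r.2‖ ^ 2) γ :=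
  (((h₁.comp_measurable measurable_fst).add (h₂.comp_measurable measurable_snd)).const_mul 2).mono'
    (by fun_prop) (ae_of_all _ fun r => by
      rw [Real.norm_of_nonneg (by positivity)]
      simpa [mul_add] using norm_sub_sq_le r.1 r.2)

theorem IsOptimalTransportPlan.isMonotoneRel_support [IsProbabilityMeasure γ]
    (hγ : IsOptimalTransportPlan (fun r : E × E => ‖r.1 - r.2‖ ^ 2) γ)
    (hint : Integrable (fun r : E × E => ‖r.1 - r.2‖ ^ 2) γ) : IsMonotoneRel γ.support :=
  fun _ hp _ hq => inner_sub_sub_nonneg_of_norm_sub_sq_add_le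
    (hγ.add_le_add_of_mem_support (by fun_prop) hint hp hq)

end QuadraticCost

theorem IsOptimalTransportPlan.ae_eq_of_map_graph_absolutelyContinuous {n : ℕ}
    {γ : Measure (EuclideanSpace ℝ (Fin n) × EuclideanSpace ℝ (Fin n))} [IsProbabilityMeasure γ]
    (hγ : IsOptimalTransportPlan (fun r => ‖r.1 - r.2‖ ^ 2) γ)
    (hint : Integrable (fun r => ‖r.1 - r.2‖ ^ 2) γ) {μ : Measure (EuclideanSpace ℝ (Fin n))}
    (hac : μ ≪ volume) {T T' : EuclideanSpace ℝ (Fin n) → EuclideanSpace ℝ (Fin n)}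
    (hT : Measurable T) (hT' : Measurable T') (hγT : μ.map (fun x => (x, T x)) ≪ γ)
    (hγT' : μ.map (fun x => (x, T' x)) ≪ γ) : T =ᵐ[μ] T' := by
  have hsupp {S} (hS : Measurable S) (hγS : μ.map (fun x => (x, S x)) ≪ γ) :
      ∀ᵐ x ∂μ, (x, S x) ∈ γ.support :=
    ae_of_ae_map (by fun_prop) (hγS.ae_le Measure.support_mem_ae)
  filter_upwards [hac.ae_le ((hγ.isMonotoneRel_support hint).ae_subsingleton_fiber
    Measure.isClosed_support), hsupp hT hγT, hsupp hT' hγT'] with x hx h₁ h₂ using hx h₁ h₂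

theorem optimal_quadratic_transport_unique_general
    (d : ℕ)
    (P₁ P₂ : Measure (EuclideanSpace ℝ (Fin d)))
    [IsProbabilityMeasure P₁] [IsProbabilityMeasure P₂]
    (hm₁ : Integrable (fun x : EuclideanSpace ℝ (Fin d) => ‖x‖ ^ 2) P₁)
    (hm₂ : Integrable (fun x : EuclideanSpace ℝ (Fin d) => ‖x‖ ^ 2) P₂)
    (hac : P₁ ≪ (volume : Measure (EuclideanSpace ℝ (Fin d))))
    (T T' : EuclideanSpace ℝ (Fin d) → EuclideanSpace ℝ (Fin d))
    (hT : Measurable T) (hT' : Measurable T')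
    (hpush : P₁.map T = P₂) (hpush' : P₁.map T' = P₂)
    (hcost : ∫ x, ‖x - T x‖ ^ 2 ∂P₁ = ∫ x, ‖x - T' x‖ ^ 2 ∂P₁)
    (hopt : ∀ γ : Measure (EuclideanSpace ℝ (Fin d) × EuclideanSpace ℝ (Fin d)),
      IsProbabilityMeasure γ →
      γ.map Prod.fst = P₁ → γ.map Prod.snd = P₂ →
      ∫ x, ‖x - T x‖ ^ 2 ∂P₁ ≤ ∫ p, ‖p.1 - p.2‖ ^ 2 ∂γ) :
    P₁ {x : EuclideanSpace ℝ (Fin d) | T x ≠ T' x} = 0 := by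
  set γ₁ := P₁.map fun x => (x, T x)
  set γ₂ := P₁.map fun x => (x, T' x)
  have hfst₁ : γ₁.fst = P₁ := by simp [γ₁, Measure.fst_map_prodMk hT]
  have hfst₂ : γ₂.fst = P₁ := by simp [γ₂, Measure.fst_map_prodMk hT']
  have hsnd₁ : γ₁.snd = P₂ := (Measure.snd_map_prodMk measurable_id).trans hpush
  have hsnd₂ : γ₂.snd = P₂ := (Measure.snd_map_prodMk measurable_id).trans hpush'
  have hint₁ := integrable_norm_sub_sq (by rwa [hfst₁]) (by rwa [hsnd₁])
  have hint₂ := integrable_norm_sub_sq (by rwa [hfst₂]) (by rwa [hsnd₂])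
  have hcost₁ : ∫ r, ‖r.1 - r.2‖ ^ 2 ∂γ₁ = ∫ x, ‖x - T x‖ ^ 2 ∂P₁ :=
    integral_map (by fun_prop) (by fun_prop)
  have hcost₂ : ∫ r, ‖r.1 - r.2‖ ^ 2 ∂γ₂ = ∫ x, ‖x - T' x‖ ^ 2 ∂P₁ :=
    integral_map (by fun_prop) (by fun_prop)
  have hopt₁ : IsOptimalTransportPlan (fun r => ‖r.1 - r.2‖ ^ 2) γ₁ := fun γ' hγ' h1 h2 =>
    hcost₁ ▸ hopt γ' hγ' (h1.trans hfst₁) (h2.trans hsnd₁)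
  have : IsProbabilityMeasure γ₁ := Measure.isProbabilityMeasure_map (by fun_prop)
  have : IsProbabilityMeasure γ₂ := Measure.isProbabilityMeasure_map (by fun_prop)
  have : IsProbabilityMeasure ((2⁻¹ : ℝ≥0∞) • (γ₁ + γ₂)) :=
    ⟨by simp [ENNReal.inv_two_add_inv_two]⟩
  refine ae_iff.1 <| IsOptimalTransportPlan.ae_eq_of_map_graph_absolutelyContinuous
    (hopt₁.inv_two_smul_add hint₁ hint₂ (hfst₂.trans hfst₁.symm) (hsnd₂.trans hsnd₁.symm)
      (by rw [hcost₁, hcost₂, hcost]))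
    ((hint₁.add_measure hint₂).smul_measure (by simp)) hac hT hT'
    ((Measure.AbsolutelyContinuous.rfl.add_right γ₂).smul_right (by simp))
    ((Measure.AbsolutelyContinuous.rfl.add_right' γ₁).smul_right (by simp))

/-- uniqueness of the optimal quadratic transport map: if `P₁`
and `P₂` are Borel probability measures on `ℝ^d` with finite second moments,
`P₁` absolutely continuous w.r.t. Lebesgue measure, and `T`, `T'` are Borel
maps each pushing `P₁` forward to `P₂` and each optimal for the quadratic cost
(their transport costs are equal and both are at most the cost of any coupling
of `(P₁, P₂)`), then `T = T'` `P₁`-almost everywhere. -/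
theorem optimal_quadratic_transport_unique
    (d : ℕ)
    (P₁ P₂ : Measure (EuclideanSpace ℝ (Fin d)))
    [IsProbabilityMeasure P₁] [IsProbabilityMeasure P₂]
    (hm₁ : Integrable (fun x : EuclideanSpace ℝ (Fin d) => ‖x‖ ^ 2) P₁)
    (hm₂ : Integrable (fun x : EuclideanSpace ℝ (Fin d) => ‖x‖ ^ 2) P₂)
    (hac : P₁ ≪ (volume : Measure (EuclideanSpace ℝ (Fin d))))
    (T T' : EuclideanSpace ℝ (Fin d) → EuclideanSpace ℝ (Fin d))
    (hT : Measurable T) (hT' : Measurable T')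
    (hpush : P₁.map T = P₂) (hpush' : P₁.map T' = P₂)
    (hcost : ∫ x, ‖x - T x‖ ^ 2 ∂P₁ = ∫ x, ‖x - T' x‖ ^ 2 ∂P₁)
    (hopt : ∀ γ : Measure (EuclideanSpace ℝ (Fin d) × EuclideanSpace ℝ (Fin d)),
      IsProbabilityMeasure γ →
      γ.map Prod.fst = P₁ → γ.map Prod.snd = P₂ →
      ∫ x, ‖x - T x‖ ^ 2 ∂P₁ ≤ ∫ p, ‖p.1 - p.2‖ ^ 2 ∂γ)
    (hopt' : ∀ γ : Measure (EuclideanSpace ℝ (Fin d) × EuclideanSpace ℝ (Fin d)),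
      IsProbabilityMeasure γ →
      γ.map Prod.fst = P₁ → γ.map Prod.snd = P₂ →
      ∫ x, ‖x - T' x‖ ^ 2 ∂P₁ ≤ ∫ p, ‖p.1 - p.2‖ ^ 2 ∂γ) :
    P₁ {x : EuclideanSpace ℝ (Fin d) | T x ≠ T' x} = 0 :=
  optimal_quadratic_transport_unique_general d P₁ P₂ hm₁ hm₂ hac T T' hT hT' hpush hpush' hcost hopt
end
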